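/- The Donsker–Varadhan representation: for probability measures P and Q on a measurable space with P absolutely continuous with respect to Q, the KL divergence satisfies D_KL(P‖Q) = sup over all measurable functions T (for which both expectations are finite) of E_P[T] − log(E_Q[e^T]). -/

import Mathlib

open MeasureTheory

/-- KL divergence `∫ log (dP/dQ) dP`. -/
noncomputable def klDiv {Ω : Type*} [MeasurableSpace Ω] (P Q : Measure Ω) : ℝ :=
  ∫ x, Real.log ((P.rnDeriv Q x).toReal) ∂P

/-!
Write `f = dP/dQ`. For admissible `T`, the tilted measure `Q.tilted T` is a probability measure
with `P ≪ Q.tilted T` and `log (dP/dQ.tilted T) = log f - T + log ∫ exp T dQ`, so Gibbs' inequality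
for it is exactly `∫ T dP - log ∫ exp T dQ ≤ ∫ log f dP`.

Conversely, the bounded functions `T_n = min (log (f + e^{-n})) n` have `∫ exp T_n dQ ≤ 1 + e^{-n}`
and `T_n ≥ min (log f) n` `P`-a.e., so their values are at least `∫ min (log f) n dP - e^{-n}`.
The negative part of `log f` is dominated by `1 / f`, and `∫ (1 / f) dP ≤ 1`; hence by monotone
convergence these bounds tend to `∫ log f dP` when `log f` is `P`-integrable and are unbounded
otherwise, in which case both sides are `0` by the junk-value conventions of `∫` and `sSup`.
-/
open Real Filter Topology

section MonotoneConvergence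

variable {α : Type*} [MeasurableSpace α] {μ : Measure α}

lemma tendsto_min_natCast_atTop (a : ℝ) : Tendsto (fun n : ℕ => min a n) atTop (𝓝 a) :=
  tendsto_const_nhds.congr' <| (eventually_ge_atTop ⌈a⌉₊).mono fun _ hn =>
    (min_eq_left ((Nat.le_ceil a).trans (Nat.cast_le.2 hn))).symm

lemma monotone_min_natCast (a : ℝ) : Monotone fun n : ℕ => min a (n : ℝ) :=
  fun _ _ hmn => min_le_min_left a (Nat.cast_le.2 hmn)

lemma integrable_of_tendsto_of_monotone_of_integral_le {f : ℕ → α → ℝ} {F : α → ℝ} {C : ℝ}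
    (hf : ∀ n, Integrable (f n) μ) (hF : AEStronglyMeasurable F μ)
    (h_mono : ∀ᵐ x ∂μ, Monotone fun n => f n x)
    (h_tendsto : ∀ᵐ x ∂μ, Tendsto (fun n => f n x) atTop (𝓝 (F x)))
    (h_le : ∀ n, ∫ x, f n x ∂μ ≤ C) : Integrable F μ := by
  have h_nonneg : ∀ n, 0 ≤ᵐ[μ] fun x => f n x - f 0 x := fun n => by
    filter_upwards [h_mono] with x hx using sub_nonneg.2 (hx (Nat.zero_le n))
  have h_lim : Tendsto (fun n => ∫⁻ x, ENNReal.ofReal (f n x - f 0 x) ∂μ) atTop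
      (𝓝 (∫⁻ x, ENNReal.ofReal (F x - f 0 x) ∂μ)) := by
    refine lintegral_tendsto_of_tendsto_of_monotone
      (fun n => ((hf n).sub (hf 0)).aemeasurable.ennreal_ofReal) ?_ ?_
    · filter_upwards [h_mono] with x hx m n hmn
      exact ENNReal.ofReal_le_ofReal (sub_le_sub_right (hx hmn) _)
    · filter_upwards [h_tendsto] with x hx
      exact (ENNReal.continuous_ofReal.tendsto _).comp (hx.sub_const _)
  have h_bound : ∫⁻ x, ENNReal.ofReal (F x - f 0 x) ∂μ ≤ ENNReal.ofReal (C - ∫ x, f 0 x ∂μ) := by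
    refine le_of_tendsto' h_lim fun n => ?_
    rw [← ofReal_integral_eq_lintegral_ofReal (f := fun x => f n x - f 0 x)
      ((hf n).sub (hf 0)) (h_nonneg n), integral_sub (hf n) (hf 0)]
    exact ENNReal.ofReal_le_ofReal (sub_le_sub_right (h_le n) _)
  have h_limit_nonneg : 0 ≤ᵐ[μ] fun x => F x - f 0 x := by
    filter_upwards [h_mono, h_tendsto] with x hx hxF
    exact sub_nonneg.2 (ge_of_tendsto' hxF fun n => hx (Nat.zero_le n))
  have h_diff : Integrable (fun x => F x - f 0 x) μ :=
    ⟨hF.sub (hf 0).1, (hasFiniteIntegral_iff_ofReal h_limit_nonneg).2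
      (h_bound.trans_lt ENNReal.ofReal_lt_top)⟩
  exact (h_diff.add (hf 0)).congr (ae_of_all _ fun x => sub_add_cancel (F x) (f 0 x))

end MonotoneConvergence

lemma Real.neg_log_le_inv {y : ℝ} (hy : 0 ≤ y) : -log y ≤ y⁻¹ := by
  rw [← log_inv]
  exact log_le_self (inv_nonneg.2 hy)

section LogLikelihoodRatio

variable {Ω : Type*} [MeasurableSpace Ω] {μ ν : Measure Ω}

lemma lintegral_inv_rnDeriv_le [μ.HaveLebesgueDecomposition ν] (h : μ ≪ ν) :
    ∫⁻ x, (μ.rnDeriv ν x)⁻¹ ∂μ ≤ ν Set.univ := by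
  rw [← lintegral_rnDeriv_mul (f := fun x => (μ.rnDeriv ν x)⁻¹) h
    (Measure.measurable_rnDeriv μ ν).inv.aemeasurable]
  calc ∫⁻ x, μ.rnDeriv ν x * (μ.rnDeriv ν x)⁻¹ ∂ν ≤ ∫⁻ _, 1 ∂ν :=
        lintegral_mono fun x => ENNReal.mul_inv_le_one _
    _ = ν Set.univ := lintegral_one

lemma integrable_inv_toReal_rnDeriv [μ.HaveLebesgueDecomposition ν] [IsFiniteMeasure ν]
    (h : μ ≪ ν) : Integrable (fun x => (μ.rnDeriv ν x).toReal⁻¹) μ := by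
  simp_rw [← ENNReal.toReal_inv]
  exact integrable_toReal_of_lintegral_ne_top (Measure.measurable_rnDeriv μ ν).inv.aemeasurable
    ((lintegral_inv_rnDeriv_le h).trans_lt (measure_lt_top ν _)).ne

lemma integrable_negPart_llr [μ.HaveLebesgueDecomposition ν] [IsFiniteMeasure ν] (h : μ ≪ ν) :
    Integrable (fun x => max (-llr μ ν x) 0) μ :=
  (integrable_inv_toReal_rnDeriv h).mono'
    ((measurable_llr μ ν).neg.max measurable_const).aestronglyMeasurable
    (ae_of_all _ fun _ => by
      rw [norm_of_nonneg (le_max_right _ _)]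
      exact max_le (neg_log_le_inv ENNReal.toReal_nonneg) (inv_nonneg.2 ENNReal.toReal_nonneg))

variable [IsFiniteMeasure μ] [IsFiniteMeasure ν]

lemma integrable_min_llr (h : μ ≪ ν) (c : ℝ) : Integrable (fun x => min (llr μ ν x) c) μ :=
  ((integrable_negPart_llr h).add (integrable_const |c|)).mono'
    ((measurable_llr μ ν).min measurable_const).aestronglyMeasurable
    (ae_of_all _ fun x => by
      have := le_max_left (-llr μ ν x) 0
      have := le_max_right (-llr μ ν x) 0
      rw [Pi.add_apply, Real.norm_eq_abs, abs_le]
      exact ⟨le_min (by linarith [abs_nonneg c]) (by linarith [neg_abs_le c]),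
        (min_le_right _ _).trans (by linarith [le_abs_self c])⟩)

lemma tendsto_integral_min_llr (h : μ ≪ ν) (h_int : Integrable (llr μ ν) μ) :
    Tendsto (fun n : ℕ => ∫ x, min (llr μ ν x) n ∂μ) atTop (𝓝 (∫ x, llr μ ν x ∂μ)) :=
  integral_tendsto_of_tendsto_of_monotone (fun n => integrable_min_llr h n) h_int
    (ae_of_all _ fun _ => monotone_min_natCast _) (ae_of_all _ fun _ => tendsto_min_natCast_atTop _)

lemma integrable_llr_of_integral_min_le (h : μ ≪ ν) {C : ℝ}
    (hC : ∀ n : ℕ, ∫ x, min (llr μ ν x) n ∂μ ≤ C) : Integrable (llr μ ν) μ :=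
  integrable_of_tendsto_of_monotone_of_integral_le (fun n => integrable_min_llr h n)
    (measurable_llr μ ν).aestronglyMeasurable (ae_of_all _ fun _ => monotone_min_natCast _)
    (ae_of_all _ fun _ => tendsto_min_natCast_atTop _) hC

end LogLikelihoodRatio

section DonskerVaradhan

variable {Ω : Type*} [MeasurableSpace Ω] {μ ν : Measure Ω}

noncomputable def dvFunctional (μ ν : Measure Ω) (T : Ω → ℝ) : ℝ :=
  ∫ x, T x ∂μ - log (∫ x, exp (T x) ∂ν)

lemma dvFunctional_le_integral_llr [IsProbabilityMeasure μ] [SigmaFinite ν] [NeZero ν]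
    (h : μ ≪ ν) (h_int : Integrable (llr μ ν) μ) {T : Ω → ℝ} (hTμ : Integrable T μ)
    (hTν : Integrable (fun x => exp (T x)) ν) : dvFunctional μ ν T ≤ ∫ x, llr μ ν x ∂μ := by
  have := isProbabilityMeasure_tilted hTν
  have h_gibbs := InformationTheory.integral_llr_add_sub_measure_univ_nonneg
    (h.trans (absolutelyContinuous_tilted hTν)) (integrable_llr_tilted_right h hTμ h_int hTν)
  rw [integral_llr_tilted_right h hTμ hTν h_int] at h_gibbs
  simp only [probReal_univ, add_sub_cancel_right] at h_gibbs
  rw [dvFunctional]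
  linarith

/-- The shift by `e^{-n}` keeps `T_n ≥ -n` where the density vanishes, at the cost of `e^{-n}`
in `∫ exp T_n dν`. -/
noncomputable def truncatedLLR (μ ν : Measure Ω) (n : ℕ) (x : Ω) : ℝ :=
  min (log ((μ.rnDeriv ν x).toReal + exp (-n))) n

lemma measurable_truncatedLLR (μ ν : Measure Ω) (n : ℕ) : Measurable (truncatedLLR μ ν n) :=
  (measurable_log.comp ((Measure.measurable_rnDeriv μ ν).ennreal_toReal.add measurable_const)).min
    measurable_const

lemma truncatedLLR_mem_Icc (μ ν : Measure Ω) (n : ℕ) (x : Ω) :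
    truncatedLLR μ ν n x ∈ Set.Icc (-n : ℝ) n := by
  refine ⟨le_min ?_ (neg_le_self n.cast_nonneg), min_le_right _ _⟩
  calc (-n : ℝ) = log (exp (-n)) := (log_exp _).symm
    _ ≤ log ((μ.rnDeriv ν x).toReal + exp (-n)) :=
        log_le_log (exp_pos _) (le_add_of_nonneg_left ENNReal.toReal_nonneg)

lemma integrable_truncatedLLR (μ ν ρ : Measure Ω) [IsFiniteMeasure ρ] (n : ℕ) :
    Integrable (truncatedLLR μ ν n) ρ :=
  .of_mem_Icc _ _ (measurable_truncatedLLR μ ν n).aemeasurable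
    (ae_of_all _ (truncatedLLR_mem_Icc μ ν n))

lemma integrable_exp_truncatedLLR (μ ν ρ : Measure Ω) [IsFiniteMeasure ρ] (n : ℕ) :
    Integrable (fun x => exp (truncatedLLR μ ν n x)) ρ :=
  .of_mem_Icc _ _ (measurable_truncatedLLR μ ν n).exp.aemeasurable
    (ae_of_all _ fun x => ⟨exp_le_exp.2 (truncatedLLR_mem_Icc μ ν n x).1,
      exp_le_exp.2 (truncatedLLR_mem_Icc μ ν n x).2⟩)

lemma exp_truncatedLLR_le (μ ν : Measure Ω) (n : ℕ) (x : Ω) :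
    exp (truncatedLLR μ ν n x) ≤ (μ.rnDeriv ν x).toReal + exp (-n) :=
  calc exp (truncatedLLR μ ν n x) ≤ exp (log ((μ.rnDeriv ν x).toReal + exp (-n))) :=
        exp_le_exp.2 (min_le_left _ _)
    _ = (μ.rnDeriv ν x).toReal + exp (-n) := exp_log (by positivity)

lemma min_llr_le_truncatedLLR [μ.HaveLebesgueDecomposition ν] [SigmaFinite μ] (h : μ ≪ ν) (n : ℕ) :
    ∀ᵐ x ∂μ, min (llr μ ν x) n ≤ truncatedLLR μ ν n x := by
  filter_upwards [Measure.rnDeriv_pos h, h.ae_le (Measure.rnDeriv_lt_top μ ν)] with x hpos hlt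
  exact min_le_min_right _ (log_le_log (ENNReal.toReal_pos hpos.ne' hlt.ne)
    (le_add_of_nonneg_right (exp_pos _).le))

lemma log_integral_exp_truncatedLLR_le [IsProbabilityMeasure μ] [IsProbabilityMeasure ν]
    (h : μ ≪ ν) (n : ℕ) : log (∫ x, exp (truncatedLLR μ ν n x) ∂ν) ≤ exp (-n) := by
  have h_int_le : ∫ x, exp (truncatedLLR μ ν n x) ∂ν ≤ 1 + exp (-n) :=
    calc ∫ x, exp (truncatedLLR μ ν n x) ∂ν ≤ ∫ x, ((μ.rnDeriv ν x).toReal + exp (-n)) ∂ν :=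
          integral_mono (integrable_exp_truncatedLLR μ ν ν n)
            (Measure.integrable_toReal_rnDeriv.add (integrable_const _)) (exp_truncatedLLR_le μ ν n)
      _ = 1 + exp (-n) := by
          rw [integral_add Measure.integrable_toReal_rnDeriv (integrable_const _),
            Measure.integral_toReal_rnDeriv h]
          simp
  linarith [log_le_sub_one_of_pos (integral_exp_pos (integrable_exp_truncatedLLR μ ν ν n))]

lemma integral_min_llr_sub_le_dvFunctional [IsProbabilityMeasure μ] [IsProbabilityMeasure ν]
    (h : μ ≪ ν) (n : ℕ) :
    ∫ x, min (llr μ ν x) n ∂μ - exp (-n) ≤ dvFunctional μ ν (truncatedLLR μ ν n) := by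
  have := integral_mono_ae (integrable_min_llr h n) (integrable_truncatedLLR μ ν μ n)
    (min_llr_le_truncatedLLR h n)
  have := log_integral_exp_truncatedLLR_le h n
  rw [dvFunctional]
  linarith

end DonskerVaradhan

/-- Donsker–Varadhan representation of the KL divergence. -/
theorem donsker_varadhan_representation {Ω : Type*} [MeasurableSpace Ω]
    (P Q : Measure Ω) [IsProbabilityMeasure P] [IsProbabilityMeasure Q]
    (hPQ : P ≪ Q) :
    klDiv P Q =
      sSup { r : ℝ | ∃ T : Ω → ℝ, Measurable T ∧ Integrable T P ∧
        Integrable (fun x => Real.exp (T x)) Q ∧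
        r = ∫ x, T x ∂P - Real.log (∫ x, Real.exp (T x) ∂Q) } := by
  set S := { r : ℝ | ∃ T : Ω → ℝ, Measurable T ∧ Integrable T P ∧
    Integrable (fun x => Real.exp (T x)) Q ∧
    r = ∫ x, T x ∂P - Real.log (∫ x, Real.exp (T x) ∂Q) }
  have h_mem (n : ℕ) : dvFunctional P Q (truncatedLLR P Q n) ∈ S :=
    ⟨_, measurable_truncatedLLR P Q n, integrable_truncatedLLR P Q P n,
      integrable_exp_truncatedLLR P Q Q n, rfl⟩
  have h_low := integral_min_llr_sub_le_dvFunctional hPQ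
  by_cases h_int : Integrable (llr P Q) P
  · have h_ub : ∀ r ∈ S, r ≤ klDiv P Q := by
      rintro _ ⟨T, -, hTP, hTQ, rfl⟩
      exact dvFunctional_le_integral_llr hPQ h_int hTP hTQ
    refine le_antisymm ?_ (csSup_le ⟨_, h_mem 0⟩ h_ub)
    have h_lim := (tendsto_integral_min_llr hPQ h_int).sub
      (tendsto_exp_neg_atTop_nhds_zero.comp tendsto_natCast_atTop_atTop)
    rw [sub_zero] at h_lim
    exact le_of_tendsto' h_lim fun n => (h_low n).trans (le_csSup ⟨_, h_ub⟩ (h_mem n))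
  · have h_unbdd : ¬ BddAbove S := by
      rintro ⟨b, hb⟩
      refine h_int (integrable_llr_of_integral_min_le hPQ (C := b + 1) fun n => ?_)
      linarith [h_low n, hb (h_mem n), exp_le_one_iff.2 (neg_nonpos.2 n.cast_nonneg)]
    rw [klDiv, ← llr_def, integral_undef h_int, Real.sSup_of_not_bddAbove h_unbdd]
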